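/- arXiv:1301.5577 — 2 statements merged into one kernel-verified Lean document; each statement's English description precedes it below -/
import Mathlib

section
/- Let Γ be a connected graph with path metric d. Suppose that to every pair of vertices (a,b) a path P(a,b) from a to b is assigned such that: (i) every vertex of P(a,b) is at distance ≤ 6 from every geodesic joining a and b, and (ii) for all vertices a,b,d there exist pairwise adjacent-or-equal vertices c_{ab} ∈ P(a,b), c_{ad} ∈ P(a,d), c_{db} ∈ P(d,b). Then every geodesic triangle in Γ is 7-centred: there is a vertex at distance ≤ 7 from each of the three sides. -/
/-- An edge-path in a simple graph from `a` to `b`, given as a sequence of vertices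
with consecutive vertices adjacent. -/
structure GraphPath {V : Type*} (G : SimpleGraph V) (a b : V) where
  len : ℕ
  seq : ℕ → V
  first : seq 0 = a
  last : seq len = b
  adj : ∀ i, i < len → G.Adj (seq i) (seq (i + 1))

/-- The set of vertices of an edge-path. -/
def GraphPath.verts {V : Type*} {G : SimpleGraph V} {a b : V} (p : GraphPath G a b) : Set V :=
  p.seq '' {i | i ≤ p.len}

/-- An edge-path is a geodesic if its length realises the path-metric distance. -/
def GraphPath.IsGeodesic {V : Type*} {G : SimpleGraph V} {a b : V} (p : GraphPath G a b) : Prop :=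
  p.len = G.dist a b


namespace SimpleGraph

variable {V : Type*} {G : SimpleGraph V}

theorem dist_le_one_of_eq_or_adj {x y : V} (h : x = y ∨ G.Adj x y) : G.dist x y ≤ 1 := by
  rcases h with rfl | hadj
  · simp
  · exact (dist_eq_one_iff_adj.mpr hadj).le

theorem Connected.exists_mem_dist_le_add (hG : G.Connected) {S : Set V} {x y : V} {m n : ℕ}
    (hxy : G.dist x y ≤ m) (hy : ∃ g ∈ S, G.dist y g ≤ n) : ∃ g ∈ S, G.dist x g ≤ m + n := by
  obtain ⟨g, hgS, hyg⟩ := hy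
  exact ⟨g, hgS, hG.dist_triangle.trans (Nat.add_le_add hxy hyg)⟩

end SimpleGraph

theorem triangles_seven_centred {V : Type*} (Γ : SimpleGraph V) (hΓ : Γ.Connected)
    (P : ∀ a b : V, GraphPath Γ a b)
    (hclose : ∀ (a b : V) (G : GraphPath Γ a b), G.IsGeodesic →
      ∀ c ∈ (P a b).verts, ∃ g ∈ G.verts, Γ.dist c g ≤ 6)
    (hcentre : ∀ a b d : V, ∃ cab ∈ (P a b).verts, ∃ cad ∈ (P a d).verts,
      ∃ cdb ∈ (P d b).verts,
        (cab = cad ∨ Γ.Adj cab cad) ∧ (cab = cdb ∨ Γ.Adj cab cdb) ∧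
        (cad = cdb ∨ Γ.Adj cad cdb))
    (a b d : V) (Gab : GraphPath Γ a b) (Gad : GraphPath Γ a d) (Gdb : GraphPath Γ d b)
    (h1 : Gab.IsGeodesic) (h2 : Gad.IsGeodesic) (h3 : Gdb.IsGeodesic) :
    ∃ c : V, (∃ v ∈ Gab.verts, Γ.dist c v ≤ 7) ∧ (∃ v ∈ Gad.verts, Γ.dist c v ≤ 7) ∧
      (∃ v ∈ Gdb.verts, Γ.dist c v ≤ 7) := by
  obtain ⟨cab, hcab, cad, hcad, cdb, hcdb, hab_ad, hab_db, -⟩ := hcentre a b d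
  have near : ∀ {x y p q : V} (G : GraphPath Γ p q), G.IsGeodesic → (x = y ∨ Γ.Adj x y) →
      y ∈ (P p q).verts → ∃ g ∈ G.verts, Γ.dist x g ≤ 7 := fun G hG hxy hy =>
    hΓ.exists_mem_dist_le_add (SimpleGraph.dist_le_one_of_eq_or_adj hxy) (hclose _ _ G hG _ hy)
  exact ⟨cab, near Gab h1 (.inl rfl) hcab, near Gad h2 hab_ad hcad, near Gdb h3 hab_db hcdb⟩
end

section
/- Let X be a connected graph with path metric d and Y ⊆ X a full subgraph on a vertex set V(Y). Suppose r : V(X) → V(Y) is a map fixing V(Y) pointwise such that d(r(x), r(x')) ≤ 2 whenever x, x' are adjacent in X, and such that whenever y ∈ V(Y) is adjacent in X to x ∈ V(X), then y is adjacent or equal to r(x) in Y. Then for any two vertices c, c' ∈ V(Y) with d_Y(c,c') ≥ 2, one has d_Y(c,c') ≤ 2·d_X(c,c') − 2; in particular every geodesic in Y is a 2-quasigeodesic in X, i.e. its vertices (c_i) satisfy |i − j| ≤ 2·d_X(c_i, c_j). -/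
/-!
Push a shortest `X`-path `c = x₀, x₁, …, xₙ = c'` into `Y` through `r`. The first and last
edges touch `Y`, so `r` moves their far endpoints to within distance 1 of `c` and `c'`, while each
of the `n - 2` middle edges moves `r` by at most 2; hence `d_Y(c, c') ≤ 2n - 2` once `n ≥ 2`,
and `n ≤ 1` forces `d_Y(c, c') ≤ 1` because `Y` is induced. Along a `Y`-geodesic
`|i - j| = d_Y(cᵢ, cⱼ)`, so the same bound gives `|i - j| ≤ 2 d_X(cᵢ, cⱼ)`.
-/

namespace GraphPath

variable {V : Type*} {G : SimpleGraph V} {a b : V}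

theorem dist_seq_le (p : GraphPath G a b) {i j : ℕ} (hij : i ≤ j) (hj : j ≤ p.len) :
    G.dist (p.seq i) (p.seq j) ≤ j - i := by
  induction j, hij using Nat.le_induction with
  | base => simp
  | succ j hij ih =>
    have hadj := p.adj j (by omega)
    calc G.dist (p.seq i) (p.seq (j + 1))
        ≤ G.dist (p.seq i) (p.seq j) + G.dist (p.seq j) (p.seq (j + 1)) :=
          hadj.reachable.dist_triangle_right _
      _ ≤ (j - i) + 1 := add_le_add (ih (by omega)) (SimpleGraph.dist_eq_one_iff_adj.2 hadj).le
      _ = j + 1 - i := by omega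

theorem IsGeodesic.sub_le_dist_seq {p : GraphPath G a b} (hp : p.IsGeodesic) (hG : G.Connected)
    {i j : ℕ} (hij : i ≤ j) (hj : j ≤ p.len) : j - i ≤ G.dist (p.seq i) (p.seq j) := by
  have hstart : G.dist a (p.seq i) ≤ i := by
    simpa [p.first] using p.dist_seq_le (Nat.zero_le i) (hij.trans hj)
  have hend : G.dist (p.seq j) b ≤ p.len - j := by
    simpa [p.last] using p.dist_seq_le hj le_rfl
  have htri₁ : G.dist a b ≤ G.dist a (p.seq i) + G.dist (p.seq i) b := hG.dist_triangle
  have htri₂ : G.dist (p.seq i) b ≤ G.dist (p.seq i) (p.seq j) + G.dist (p.seq j) b :=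
    hG.dist_triangle
  have hlen : p.len = G.dist a b := hp
  omega

end GraphPath

theorem SimpleGraph.Connected.dist_le_mul_length {V W : Type*} {G : SimpleGraph V}
    {H : SimpleGraph W} (hH : H.Connected) {f : V → W} {K : ℕ}
    (hf : ∀ x x', G.Adj x x' → H.dist (f x) (f x') ≤ K) {x x' : V} (w : G.Walk x x') :
    H.dist (f x) (f x') ≤ K * w.length := by
  induction w with
  | nil => simp
  | @cons x y z hxy w ih =>
    calc H.dist (f x) (f z) ≤ H.dist (f x) (f y) + H.dist (f y) (f z) := hH.dist_triangle
      _ ≤ K + K * w.length := add_le_add (hf x y hxy) ih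
      _ = K * (w.cons hxy).length := by rw [SimpleGraph.Walk.length_cons]; ring

section Retraction

variable {V : Type*} {X : SimpleGraph V} {S : Set V} {r : V → S}

theorem dist_induce_retract_le_one_of_adj
    (hadj : ∀ (y : S) (x : V), X.Adj (y : V) x → r x = y ∨ (X.induce S).Adj y (r x))
    {y : S} {x : V} (h : X.Adj (y : V) x) : (X.induce S).dist y (r x) ≤ 1 := by
  rcases hadj y x h with h | h
  · simp [h]
  · exact (SimpleGraph.dist_eq_one_iff_adj.2 h).le

theorem dist_induce_retract_add_one_le (hY : (X.induce S).Connected)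
    (hlip : ∀ x x' : V, X.Adj x x' → (X.induce S).dist (r x) (r x') ≤ 2)
    (hadj : ∀ (y : S) (x : V), X.Adj (y : V) x → r x = y ∨ (X.induce S).Adj y (r x))
    {c : S} {x : V} (w : X.Walk c x) (hw : 0 < w.length) :
    (X.induce S).dist c (r x) + 1 ≤ 2 * w.length := by
  cases w with
  | nil => simp at hw
  | @cons _ x₁ _ hcx₁ w =>
    have hfirst := dist_induce_retract_le_one_of_adj hadj hcx₁
    have hrest := hY.dist_le_mul_length hlip w
    have htri := hY.dist_triangle (u := c) (v := r x₁) (w := r x)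
    rw [SimpleGraph.Walk.length_cons]
    omega

theorem dist_induce_le_two_mul_dist_sub_two (hX : X.Connected) (hY : (X.induce S).Connected)
    (hlip : ∀ x x' : V, X.Adj x x' → (X.induce S).dist (r x) (r x') ≤ 2)
    (hadj : ∀ (y : S) (x : V), X.Adj (y : V) x → r x = y ∨ (X.induce S).Adj y (r x))
    {c c' : S} (hcc' : 2 ≤ (X.induce S).dist c c') :
    (X.induce S).dist c c' ≤ 2 * X.dist (c : V) (c' : V) - 2 := by
  have hne : (c : V) ≠ c' := by
    rintro h
    simp [Subtype.coe_injective h] at hcc'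
  obtain ⟨w, hw⟩ := hX.exists_walk_length_eq_dist (c : V) (c' : V)
  obtain ⟨x₁, hcx₁, w, rfl⟩ := w.exists_eq_cons_of_ne hne
  rw [← hw, SimpleGraph.Walk.length_cons]
  rcases Nat.eq_zero_or_pos w.length with hw₀ | hw₀
  · -- `c` and `c'` are adjacent in `X`, hence in the induced subgraph.
    have hx₁ : x₁ = c' := w.eq_of_length_eq_zero hw₀
    subst hx₁
    have hdist : (X.induce S).dist c c' = 1 := SimpleGraph.dist_eq_one_iff_adj.2 hcx₁
    omega
  · have hfirst := dist_induce_retract_le_one_of_adj hadj hcx₁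
    have hrest := dist_induce_retract_add_one_le hY hlip hadj w.reverse
      (by rwa [SimpleGraph.Walk.length_reverse])
    rw [SimpleGraph.Walk.length_reverse, SimpleGraph.dist_comm] at hrest
    have htri := hY.dist_triangle (u := c) (v := r x₁) (w := c')
    omega

theorem dist_induce_le_two_mul_dist (hX : X.Connected) (hY : (X.induce S).Connected)
    (hlip : ∀ x x' : V, X.Adj x x' → (X.induce S).dist (r x) (r x') ≤ 2)
    (hadj : ∀ (y : S) (x : V), X.Adj (y : V) x → r x = y ∨ (X.induce S).Adj y (r x))
    (c c' : S) : (X.induce S).dist c c' ≤ 2 * X.dist (c : V) (c' : V) := by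
  obtain rfl | hne := eq_or_ne c c'
  · simp
  have hpos : 0 < X.dist (c : V) (c' : V) := hX.pos_dist_of_ne (Subtype.coe_injective.ne hne)
  rcases lt_or_ge ((X.induce S).dist c c') 2 with hlt | hge
  · omega
  · have hbound := dist_induce_le_two_mul_dist_sub_two hX hY hlip hadj hge
    omega

end Retraction

theorem retraction_quasigeodesic_general {V : Type*} (X : SimpleGraph V) (S : Set V)
    (hX : X.Connected) (hY : (X.induce S).Connected)
    (r : V → S)
    (hlip : ∀ x x' : V, X.Adj x x' → (X.induce S).dist (r x) (r x') ≤ 2)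
    (hadj : ∀ (y : S) (x : V), X.Adj (y : V) x → r x = y ∨ (X.induce S).Adj y (r x)) :
    (∀ c c' : S, 2 ≤ (X.induce S).dist c c' →
      (X.induce S).dist c c' ≤ 2 * X.dist (c : V) (c' : V) - 2) ∧
    (∀ (a b : S) (G : GraphPath (X.induce S) a b), G.IsGeodesic →
      ∀ i j : ℕ, i ≤ j → j ≤ G.len →
        j - i ≤ 2 * X.dist (G.seq i : V) (G.seq j : V)) :=
  ⟨fun _ _ => dist_induce_le_two_mul_dist_sub_two hX hY hlip hadj,
    fun _ _ _ hG _ _ hij hj =>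
      (hG.sub_le_dist_seq hY hij hj).trans (dist_induce_le_two_mul_dist hX hY hlip hadj _ _)⟩

theorem retraction_quasigeodesic {V : Type*} (X : SimpleGraph V) (S : Set V)
    (hX : X.Connected) (hY : (X.induce S).Connected)
    (r : V → S) (hfix : ∀ y : S, r (y : V) = y)
    (hlip : ∀ x x' : V, X.Adj x x' → (X.induce S).dist (r x) (r x') ≤ 2)
    (hadj : ∀ (y : S) (x : V), X.Adj (y : V) x → r x = y ∨ (X.induce S).Adj y (r x)) :
    (∀ c c' : S, 2 ≤ (X.induce S).dist c c' →
      (X.induce S).dist c c' ≤ 2 * X.dist (c : V) (c' : V) - 2) ∧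
    (∀ (a b : S) (G : GraphPath (X.induce S) a b), G.IsGeodesic →
      ∀ i j : ℕ, i ≤ j → j ≤ G.len →
        j - i ≤ 2 * X.dist (G.seq i : V) (G.seq j : V)) :=
  retraction_quasigeodesic_general X S hX hY r hlip hadj
end
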